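/- arXiv:1502.04365 — 5 statements merged into one kernel-verified Lean document; each statement's English description precedes it below -/
import Mathlib

section
/- Let G be a group, H a subgroup of G, N a natural number, and A, B : ℕ → Set G families of subsets of G such that B is antitone, i.e. B n ⊆ B m whenever m ≤ n. Let S = ⋃_{n < N} (A n \ B (n+1)), and assume S is invariant under right multiplication by H, i.e. s * h ∈ S for all s ∈ S and h ∈ H. Then S = ⋃_{n < N} ((A n * H) \ (B (n+1) * H)), where for X ⊆ G we write X * H = {x * h : x ∈ X, h ∈ H}. -/
open Pointwise

/-- If `S = ⋃_{n < N} (A n \ B (n+1))` with `B` antitone and `S` invariant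
under right multiplication by the subgroup `H`, then
`S = ⋃_{n < N} ((A n * H) \ (B (n+1) * H))`. -/
theorem stmt_0 {G : Type*} [Group G] (H : Subgroup G) (N : ℕ) (A B : ℕ → Set G)
    (hB : ∀ m n : ℕ, m ≤ n → B n ⊆ B m)
    (S : Set G) (hS : S = ⋃ n < N, A n \ B (n + 1))
    (hinv : ∀ s ∈ S, ∀ h ∈ H, s * h ∈ S) :
    S = ⋃ n < N, (A n * (H : Set G)) \ (B (n + 1) * (H : Set G)) := by
  classical
  ext x
  simp only [Set.mem_iUnion, exists_prop]
  constructor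
  · intro hx
    have hx0 := hx
    rw [hS] at hx0
    simp only [Set.mem_iUnion, exists_prop] at hx0
    obtain ⟨n0, hn0N, hn0⟩ := hx0
    set Q : ℕ → Prop := fun n => n < N ∧ ∃ h ∈ H, x * h ∈ A n \ B (n + 1) with hQdef
    have hQn0 : Q n0 := ⟨hn0N, 1, one_mem H, by simpa using hn0⟩
    set n := Nat.findGreatest Q N with hn
    have hQn : Q n := Nat.findGreatest_spec (le_of_lt hn0N) hQn0
    obtain ⟨hnN, h, hhH, hxh⟩ := hQn
    refine ⟨n, hnN, ?_, ?_⟩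
    · rw [Set.mem_mul]
      exact ⟨x * h, hxh.1, h⁻¹, inv_mem hhH, by group⟩
    · intro hxB
      rw [Set.mem_mul] at hxB
      obtain ⟨b, hb, k, hkH, hbk⟩ := hxB
      have hxk : x * k⁻¹ = b := by rw [← hbk]; group
      have hxkS : x * k⁻¹ ∈ S := hinv x hx k⁻¹ (inv_mem hkH)
      rw [hS] at hxkS
      simp only [Set.mem_iUnion, exists_prop] at hxkS
      obtain ⟨m, hmN, hm⟩ := hxkS
      have hbB : b ∈ B (n + 1) := hb
      have hmn : n < m := by
        by_contra hle
        push_neg at hle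
        exact hm.2 (hB (m + 1) (n + 1) (by omega) (hxk ▸ hbB))
      exact Nat.findGreatest_is_greatest hmn (le_of_lt hmN) ⟨hmN, k⁻¹, inv_mem hkH, hm⟩
  · rintro ⟨n, hnN, hxA, hxB⟩
    rw [Set.mem_mul] at hxA
    obtain ⟨a, ha, h, hhH, hah⟩ := hxA
    have haB : a ∉ B (n + 1) := by
      intro hcon
      exact hxB (Set.mem_mul.2 ⟨a, hcon, h, hhH, hah⟩)
    have haS : a ∈ S := by
      rw [hS]
      simp only [Set.mem_iUnion, exists_prop]
      exact ⟨n, hnN, ha, haB⟩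
    have := hinv a haS h hhH
    rwa [hah] at this
end

section
/- Let G be a group, H a subgroup of G, N a natural number, and A, B : ℕ → Set G families of subsets of G such that B is antitone, i.e. B n ⊆ B m whenever m ≤ n. Let S = ⋃_{n < N} (A n \ B (n+1)), and assume S is invariant under right multiplication by H, i.e. s * h ∈ S for all s ∈ S and h ∈ H. Let π : G → G ⧸ H be the canonical map onto the space of left cosets of H. Then π '' S = ⋃_{n < N} ((π '' (A n)) \ (π '' (B (n+1)))). -/
/-- If `S = ⋃_{n < N} (A n \ B (n+1))` with `B` antitone and `S` invariant
under right multiplication by the subgroup `H`, and `π : G → G ⧸ H` is the canonical map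
onto the space of left cosets, then `π '' S = ⋃_{n < N} ((π '' (A n)) \ (π '' (B (n+1))))`. -/
theorem stmt_1 {G : Type*} [Group G] (H : Subgroup G) (N : ℕ) (A B : ℕ → Set G)
    (hB : ∀ m n : ℕ, m ≤ n → B n ⊆ B m)
    (S : Set G) (hS : S = ⋃ n < N, A n \ B (n + 1))
    (hinv : ∀ s ∈ S, ∀ h ∈ H, s * h ∈ S) :
    ((QuotientGroup.mk : G → G ⧸ H) '' S) =
      ⋃ n < N, ((QuotientGroup.mk : G → G ⧸ H) '' A n) \
        ((QuotientGroup.mk : G → G ⧸ H) '' B (n + 1)) := by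
  classical
  ext x
  simp only [Set.mem_image, Set.mem_iUnion, Set.mem_diff]
  constructor
  · rintro ⟨s, hs, rfl⟩
    -- P k : the coset of s contains an element of A k \ B (k+1), with k < N
    set P : ℕ → Prop := fun k =>
      ∃ g : G, (QuotientGroup.mk g : G ⧸ H) = QuotientGroup.mk s ∧ k < N ∧
        g ∈ A k ∧ g ∉ B (k + 1) with hPdef
    have hmem : ∀ b : G, (QuotientGroup.mk b : G ⧸ H) = QuotientGroup.mk s → b ∈ S := by
      intro b hb
      have h' : s⁻¹ * b ∈ H := QuotientGroup.eq.mp hb.symm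
      have := hinv s hs (s⁻¹ * b) h'
      simpa [mul_assoc] using this
    have hex : ∃ k, k ≤ N ∧ P k := by
      rw [hS] at hs
      simp only [Set.mem_iUnion, Set.mem_diff] at hs
      obtain ⟨k, hkN, hkA, hkB⟩ := hs
      exact ⟨k, hkN.le, s, rfl, hkN, hkA, hkB⟩
    obtain ⟨k₀, hk₀N, hk₀⟩ := hex
    set n := Nat.findGreatest P N with hn
    have hPn : P n := Nat.findGreatest_spec hk₀N hk₀
    obtain ⟨g, hgq, hnN, hgA, hgB⟩ := hPn
    refine ⟨n, hnN, ⟨g, hgA, hgq⟩, ?_⟩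
    rintro ⟨b, hbB, hbq⟩
    have hbS : b ∈ S := hmem b hbq
    rw [hS] at hbS
    simp only [Set.mem_iUnion, Set.mem_diff] at hbS
    obtain ⟨m, hmN, hmA, hmB⟩ := hbS
    have hnm : n < m := by
      by_contra hle
      push_neg at hle
      exact hmB (hB (m + 1) (n + 1) (Nat.succ_le_succ hle) hbB)
    have : m ≤ n := Nat.le_findGreatest hmN.le ⟨b, hbq, hmN, hmA, hmB⟩
    omega
  · rintro ⟨n, hnN, ⟨a, haA, rfl⟩, hnb⟩
    refine ⟨a, ?_, rfl⟩
    rw [hS]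
    simp only [Set.mem_iUnion, Set.mem_diff]
    exact ⟨n, hnN, haA, fun hb => hnb ⟨a, hb, rfl⟩⟩
end

section
/- Let S be a compact topological space, K a Hausdorff topological space, and π : S → K a continuous map. Let F ⊆ S be a clopen set, D ⊆ S an arbitrary set, and C = closure of D. Suppose U ⊆ K satisfies π '' (D ∩ F) ⊆ U and π '' (D \ F) ⊆ Uᶜ, and that U is a finite Boolean combination of closed sets, i.e. U = ⋃_{i ∈ s} (C i \ D i) for a finite index set s and closed sets C i, D i ⊆ K. Then the set E = (π '' (C ∩ F)) ∩ (π '' (C \ F)) is closed and has empty interior; in particular E is nowhere dense (hence meagre) in K. -/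
/-!
A point of `E` is the image both of a limit of `D` inside `F` and of one outside `F`. Since `F`
is clopen and `π` continuous, the former maps into `closure U` and the latter into `closure Uᶜ`,
so `E ⊆ frontier U`. The frontier of a finite Boolean combination of closed sets lies in a finite
union of frontiers of closed sets, hence is nowhere dense. `E` is closed as an intersection of
images of compact sets in a Hausdorff space.
-/

open Set

section NowhereDense

variable {X : Type*} [TopologicalSpace X]

theorem IsNowhereDense.union {s t : Set X} (hs : IsNowhereDense s) (ht : IsNowhereDense t) :
    IsNowhereDense (s ∪ t) := by
  rw [IsNowhereDense, closure_union, interior_union_isClosed_of_interior_empty isClosed_closure ht]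
  exact hs

theorem isNowhereDense_biUnion_finset {ι : Type*} {s : Finset ι} {f : ι → Set X}
    (h : ∀ i ∈ s, IsNowhereDense (f i)) : IsNowhereDense (⋃ i ∈ s, f i) := by
  classical
  induction s using Finset.induction_on with
  | empty => simp
  | insert a t _ ih =>
    rw [Finset.set_biUnion_insert]
    exact (h a (Finset.mem_insert_self a t)).union
      (ih fun i hi => h i (Finset.mem_insert_of_mem hi))

theorem IsClosed.isNowhereDense_frontier {s : Set X} (hs : IsClosed s) :
    IsNowhereDense (frontier s) :=
  isClosed_frontier.isNowhereDense_iff.mpr (interior_frontier hs)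

theorem frontier_biUnion_finset_subset {ι : Type*} (s : Finset ι) (f : ι → Set X) :
    frontier (⋃ i ∈ s, f i) ⊆ ⋃ i ∈ s, frontier (f i) := by
  rintro x ⟨hx_closure, hx_interior⟩
  rw [Finset.closure_biUnion, mem_iUnion₂] at hx_closure
  obtain ⟨i, hi, hx⟩ := hx_closure
  exact mem_iUnion₂.mpr ⟨i, hi, hx, fun h => hx_interior (interior_mono (subset_iUnion₂ i hi) h)⟩

theorem frontier_sdiff_subset (s t : Set X) : frontier (s \ t) ⊆ frontier s ∪ frontier t := by
  refine (frontier_inter_subset s tᶜ).trans ?_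
  rw [frontier_compl]
  exact union_subset_union inter_subset_left inter_subset_right

theorem isNowhereDense_frontier_biUnion_sdiff {ι : Type*} {s : Finset ι} {C D : ι → Set X}
    (hC : ∀ i ∈ s, IsClosed (C i)) (hD : ∀ i ∈ s, IsClosed (D i)) :
    IsNowhereDense (frontier (⋃ i ∈ s, C i \ D i)) :=
  (isNowhereDense_biUnion_finset fun i hi =>
      (hC i hi).isNowhereDense_frontier.union (hD i hi).isNowhereDense_frontier).mono
    ((frontier_biUnion_finset_subset s _).trans
      (iUnion₂_mono fun i _ => frontier_sdiff_subset (C i) (D i)))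

end NowhereDense

section Domination

variable {X Y : Type*} [TopologicalSpace X] [TopologicalSpace Y] {π : X → Y} {F D : Set X}
  {U : Set Y}

theorem image_closure_inter_subset_closure (hπ : Continuous π) (hF : IsOpen F)
    (h : π '' (D ∩ F) ⊆ U) : π '' (closure D ∩ F) ⊆ closure U :=
  calc π '' (closure D ∩ F)
    _ ⊆ π '' closure (D ∩ F) := by
      rw [inter_comm, inter_comm D]
      exact image_mono hF.inter_closure
    _ ⊆ closure (π '' (D ∩ F)) := image_closure_subset_closure_image hπ
    _ ⊆ closure U := closure_mono h

theorem image_inter_image_diff_subset_frontier (hπ : Continuous π) (hF : IsClopen F)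
    (h_in : π '' (D ∩ F) ⊆ U) (h_out : π '' (D \ F) ⊆ Uᶜ) :
    π '' (closure D ∩ F) ∩ π '' (closure D \ F) ⊆ frontier U := by
  rw [frontier_eq_closure_inter_closure]
  exact inter_subset_inter (image_closure_inter_subset_closure hπ hF.isOpen h_in)
    (image_closure_inter_subset_closure hπ hF.isClosed.isOpen_compl h_out)

end Domination

/-- Abstract Baire-generic compact domination: with `S` compact, `K` Hausdorff,
`π` continuous, `F` clopen, `C = closure D`, `π '' (D ∩ F) ⊆ U`, `π '' (D \ F) ⊆ Uᶜ`,
and `U` a finite Boolean combination of closed sets, the set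
`E = (π '' (C ∩ F)) ∩ (π '' (C \ F))` is closed with empty interior,
hence nowhere dense and meagre in `K`. -/
theorem stmt_4 {S K : Type*} [TopologicalSpace S] [TopologicalSpace K]
    [CompactSpace S] [T2Space K]
    (π : S → K) (hπ : Continuous π) (F : Set S) (hF : IsClopen F)
    (D C : Set S) (hC : C = closure D) (U : Set K)
    (h1 : π '' (D ∩ F) ⊆ U) (h2 : π '' (D \ F) ⊆ Uᶜ)
    {ι : Type*} (s : Finset ι) (Cs Ds : ι → Set K)
    (hCs : ∀ i ∈ s, IsClosed (Cs i)) (hDs : ∀ i ∈ s, IsClosed (Ds i))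
    (hU : U = ⋃ i ∈ s, Cs i \ Ds i) :
    IsClosed ((π '' (C ∩ F)) ∩ (π '' (C \ F))) ∧
      interior ((π '' (C ∩ F)) ∩ (π '' (C \ F))) = ∅ ∧
      IsNowhereDense ((π '' (C ∩ F)) ∩ (π '' (C \ F))) ∧
      IsMeagre ((π '' (C ∩ F)) ∩ (π '' (C \ F))) := by
  subst hC hU
  have hclosed : IsClosed (π '' (closure D ∩ F) ∩ π '' (closure D \ F)) :=
    (hπ.isClosedMap _ (isClosed_closure.inter hF.isClosed)).inter
      (hπ.isClosedMap _ (isClosed_closure.sdiff hF.isOpen))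
  have hnowhere : IsNowhereDense (π '' (closure D ∩ F) ∩ π '' (closure D \ F)) :=
    (isNowhereDense_frontier_biUnion_sdiff hCs hDs).mono
      (image_inter_image_diff_subset_frontier hπ hF h1 h2)
  exact ⟨hclosed, hclosed.isNowhereDense_iff.mp hnowhere, hnowhere, hnowhere.isMeagre⟩
end

section
/- Let α be a set, let B₀ be a collection of subsets of α containing the whole set α and closed under complement and binary union, and let I be a collection of subsets of α containing ∅, closed under binary union, and downward closed (U ⊆ V and V ∈ I imply U ∈ I). Define B to be the collection of all U ⊆ α for which there exists V ∈ B₀ with the symmetric difference U ∆ V ∈ I. Let ν₀ : Set α → ℝ satisfy: ν₀(α) = 1; ν₀(V) ≥ 0 for all V ∈ B₀; ν₀(U ∪ V) = ν₀(U) + ν₀(V) for all disjoint U, V ∈ B₀; and ν₀(W) = 0 for all W ∈ B₀ ∩ I. Then there exists ν : Set α → ℝ such that: ν(V) = ν₀(V) for all V ∈ B₀; ν(U) ≥ 0 for all U ∈ B; ν(U ∪ V) = ν(U) + ν(V) for all disjoint U, V ∈ B; and ν(W) = 0 for all W ∈ I. -/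
/-- Extending a measure by an ideal: a finitely additive probability
measure `ν₀` on a Boolean algebra `B₀` of subsets of `α` vanishing on `B₀ ∩ I`
extends to a finitely additive measure `ν` on `B = {U | ∃ V ∈ B₀, U ∆ V ∈ I}`
which vanishes on all of `I`. -/
theorem stmt_6 {α : Type*} (B₀ I : Set (Set α))
    (hB₀univ : Set.univ ∈ B₀)
    (hB₀compl : ∀ U ∈ B₀, Uᶜ ∈ B₀)
    (hB₀union : ∀ U ∈ B₀, ∀ V ∈ B₀, U ∪ V ∈ B₀)
    (hIempty : (∅ : Set α) ∈ I)
    (hIunion : ∀ U ∈ I, ∀ V ∈ I, U ∪ V ∈ I)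
    (hIdown : ∀ U V : Set α, U ⊆ V → V ∈ I → U ∈ I)
    (B : Set (Set α))
    (hB : B = {U : Set α | ∃ V ∈ B₀, (U \ V) ∪ (V \ U) ∈ I})
    (ν₀ : Set α → ℝ)
    (hν₀univ : ν₀ Set.univ = 1)
    (hν₀nonneg : ∀ V ∈ B₀, 0 ≤ ν₀ V)
    (hν₀add : ∀ U ∈ B₀, ∀ V ∈ B₀, Disjoint U V → ν₀ (U ∪ V) = ν₀ U + ν₀ V)
    (hν₀zero : ∀ W ∈ B₀ ∩ I, ν₀ W = 0) :
    ∃ ν : Set α → ℝ,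
      (∀ V ∈ B₀, ν V = ν₀ V) ∧
      (∀ U ∈ B, 0 ≤ ν U) ∧
      (∀ U ∈ B, ∀ V ∈ B, Disjoint U V → ν (U ∪ V) = ν U + ν V) ∧
      (∀ W ∈ I, ν W = 0) := by
  classical
  subst hB
  -- closure properties of B₀
  have hB₀inter : ∀ U ∈ B₀, ∀ V ∈ B₀, U ∩ V ∈ B₀ := by
    intro U hU V hV
    have := hB₀compl _ (hB₀union _ (hB₀compl _ hU) _ (hB₀compl _ hV))
    simpa [Set.compl_union] using this
  have hB₀diff : ∀ U ∈ B₀, ∀ V ∈ B₀, U \ V ∈ B₀ := by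
    intro U hU V hV
    simpa [Set.diff_eq] using hB₀inter _ hU _ (hB₀compl _ hV)
  have hB₀empty : (∅ : Set α) ∈ B₀ := by simpa using hB₀compl _ hB₀univ
  -- splitting lemma
  have split : ∀ A ∈ B₀, ∀ C ∈ B₀, ν₀ A = ν₀ (A ∩ C) + ν₀ (A \ C) := by
    intro A hA C hC
    have hd : Disjoint (A ∩ C) (A \ C) := by
      exact Set.disjoint_left.2 fun x hx hx' => hx'.2 hx.2
    have := hν₀add _ (hB₀inter _ hA _ hC) _ (hB₀diff _ hA _ hC) hd
    rwa [Set.inter_union_diff] at this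
  -- agreement of ν₀ on any two witnesses
  have key : ∀ U : Set α, ∀ V₁ ∈ B₀, ∀ V₂ ∈ B₀,
      (U \ V₁) ∪ (V₁ \ U) ∈ I → (U \ V₂) ∪ (V₂ \ U) ∈ I → ν₀ V₁ = ν₀ V₂ := by
    intro U V₁ h1 V₂ h2 hI1 hI2
    have hbig : ((U \ V₁) ∪ (V₁ \ U)) ∪ ((U \ V₂) ∪ (V₂ \ U)) ∈ I :=
      hIunion _ hI1 _ hI2
    have hzero : ∀ W₁ ∈ B₀, ∀ W₂ ∈ B₀,
        (U \ W₂) ∪ (W₂ \ U) ∈ I → (U \ W₁) ∪ (W₁ \ U) ∈ I → ν₀ (W₁ \ W₂) = 0 := by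
      intro W₁ hW₁ W₂ hW₂ hJ2 hJ1
      refine hν₀zero _ ⟨hB₀diff _ hW₁ _ hW₂, hIdown _ _ ?_ (hIunion _ hJ1 _ hJ2)⟩
      intro x hx
      by_cases hxU : x ∈ U
      · exact Or.inr (Or.inl ⟨hxU, hx.2⟩)
      · exact Or.inl (Or.inr ⟨hx.1, hxU⟩)
    have e1 : ν₀ V₁ = ν₀ (V₁ ∩ V₂) := by
      have := split _ h1 _ h2
      rw [this, hzero _ h1 _ h2 hI2 hI1, add_zero]
    have e2 : ν₀ V₂ = ν₀ (V₁ ∩ V₂) := by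
      have := split _ h2 _ h1
      rw [this, hzero _ h2 _ h1 hI1 hI2, add_zero, Set.inter_comm]
    rw [e1, e2]
  -- define ν
  set ν : Set α → ℝ := fun U =>
    if h : ∃ V ∈ B₀, (U \ V) ∪ (V \ U) ∈ I then ν₀ h.choose else 0 with hνdef
  have hν : ∀ U : Set α, ∀ V ∈ B₀, (U \ V) ∪ (V \ U) ∈ I → ν U = ν₀ V := by
    intro U V hV hIV
    have h : ∃ V ∈ B₀, (U \ V) ∪ (V \ U) ∈ I := ⟨V, hV, hIV⟩
    rw [hνdef]
    simp only [dif_pos h]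
    obtain ⟨hc1, hc2⟩ := h.choose_spec
    exact key U _ hc1 _ hV hc2 hIV
  refine ⟨ν, ?_, ?_, ?_, ?_⟩
  · intro V hV
    exact hν V V hV (by simpa using hIempty)
  · rintro U ⟨V, hV, hIV⟩
    rw [hν U V hV hIV]
    exact hν₀nonneg _ hV
  · rintro U ⟨VU, hVU, hIU⟩ V ⟨VV, hVV, hIV⟩ hd
    have hVUV : ((U ∪ V) \ (VU ∪ VV)) ∪ ((VU ∪ VV) \ (U ∪ V)) ∈ I := by
      refine hIdown _ _ ?_ (hIunion _ hIU _ hIV)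
      intro x hx
      rcases hx with ⟨hx1, hx2⟩ | ⟨hx1, hx2⟩
      · simp only [Set.mem_union, not_or] at hx2
        rcases hx1 with h | h
        · exact Or.inl (Or.inl ⟨h, hx2.1⟩)
        · exact Or.inr (Or.inl ⟨h, hx2.2⟩)
      · simp only [Set.mem_union, not_or] at hx2
        rcases hx1 with h | h
        · exact Or.inl (Or.inr ⟨h, hx2.1⟩)
        · exact Or.inr (Or.inr ⟨h, hx2.2⟩)
    rw [hν _ _ (hB₀union _ hVU _ hVV) hVUV, hν U VU hVU hIU, hν V VV hVV hIV]
    -- ν₀ (VU ∪ VV) = ν₀ VU + ν₀ VV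
    have hinterI : VU ∩ VV ∈ I := by
      refine hIdown _ _ ?_ (hIunion _ hIU _ hIV)
      intro x hx
      by_cases hxU : x ∈ U
      · have hxV : x ∉ V := Set.disjoint_left.1 hd hxU
        exact Or.inr (Or.inr ⟨hx.2, hxV⟩)
      · exact Or.inl (Or.inr ⟨hx.1, hxU⟩)
    have hinter0 : ν₀ (VU ∩ VV) = 0 :=
      hν₀zero _ ⟨hB₀inter _ hVU _ hVV, hinterI⟩
    have hd2 : Disjoint VU (VV \ VU) :=
      Set.disjoint_left.2 fun x hx hx' => hx'.2 hx
    have e : ν₀ (VU ∪ VV) = ν₀ VU + ν₀ (VV \ VU) := by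
      have := hν₀add _ hVU _ (hB₀diff _ hVV _ hVU) hd2
      rwa [Set.union_diff_self] at this
    have e2 : ν₀ VV = ν₀ (VV \ VU) := by
      have := split _ hVV _ hVU
      rw [this, Set.inter_comm, hinter0, zero_add]
    rw [e, e2]
  · intro W hW
    have : (W \ ∅) ∪ ((∅ : Set α) \ W) ∈ I := by simpa using hW
    rw [hν W ∅ hB₀empty this]
    exact hν₀zero _ ⟨hB₀empty, hIempty⟩
end

section
/- Let P be a Polish space which is a topological group (with continuous multiplication and inversion), equipped with its Borel σ-algebra. Let A ⊆ P be a Borel set, n a natural number, and I ⊆ Fin n. Then the set A_I = {x : Fin n → P | ∃ g₁ g₂ : P, ∀ i : Fin n, (g₁⁻¹ * (x i) * g₂⁻¹ ∈ A ↔ i ∈ I)} is an analytic subset of the product space Fin n → P (with the product topology). -/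
/-!
The set is the projection to `Fin n → P` of the set of triples `(x, g₁, g₂)` witnessing
membership. That set is Borel in the Polish space `(Fin n → P) × P × P`, being a finite
intersection of preimages of `A` or of its complement under the continuous maps
`(x, g₁, g₂) ↦ g₁⁻¹ * x i * g₂⁻¹`, and projections of Borel sets are analytic.
-/

open MeasureTheory Set

theorem measurableSet_setOf_forall_mem_iff {α β ι : Type*} [MeasurableSpace α]
    [MeasurableSpace β] [Countable ι] {f : ι → α → β} (hf : ∀ i, Measurable (f i))
    {A : Set β} (hA : MeasurableSet A) (I : Set ι) :
    MeasurableSet {a | ∀ i, (f i a ∈ A ↔ i ∈ I)} := by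
  rw [ofPred_forall]
  refine .iInter fun i => ?_
  by_cases hi : i ∈ I
  · simp only [hi, iff_true]
    exact hf i hA
  · simp only [hi, iff_false]
    exact (hf i hA).compl

/-- For a Polish topological group `P`, a Borel set `A ⊆ P`, `n : ℕ` and
`I ⊆ Fin n`, the set `{x : Fin n → P | ∃ g₁ g₂, ∀ i, g₁⁻¹ * x i * g₂⁻¹ ∈ A ↔ i ∈ I}`
is analytic in the product space. -/
theorem stmt_8 {P : Type*} [TopologicalSpace P] [PolishSpace P] [Group P]
    [IsTopologicalGroup P] [MeasurableSpace P] [BorelSpace P]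
    (A : Set P) (hA : MeasurableSet A) (n : ℕ) (I : Set (Fin n)) :
    MeasureTheory.AnalyticSet
      {x : Fin n → P | ∃ g₁ g₂ : P, ∀ i : Fin n, (g₁⁻¹ * x i * g₂⁻¹ ∈ A ↔ i ∈ I)} := by
  set W : Set ((Fin n → P) × P × P) := {p | ∀ i, (p.2.1⁻¹ * p.1 i * p.2.2⁻¹ ∈ A ↔ i ∈ I)}
  have hW : MeasurableSet W := measurableSet_setOf_forall_mem_iff (fun i => by fun_prop) hA I
  have hproj : {x : Fin n → P | ∃ g₁ g₂ : P, ∀ i, (g₁⁻¹ * x i * g₂⁻¹ ∈ A ↔ i ∈ I)} =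
      Prod.fst '' W := by
    ext x
    simp [W]
  rw [hproj]
  exact hW.analyticSet_image measurable_fst
end
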